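/- arXiv:2101.02838 — 5 statements merged into one kernel-verified Lean document; each statement's English description precedes it below -/
import Mathlib

section
/- For every integer k ≥ 2, a finite connected simple graph G is a (k,2)-completeness-resolvable graph if and only if G is isomorphic to a graph in B_k. -/
open SimpleGraph

/-- `w` enumerates a `(k, m)`-completeness-resolving set of `G`:
`w` is injective, its range `W` is a proper subset of the vertex set, and the map
`u ↦ (dist (w 1) u, …, dist (w k) u)` is a bijection from `V ∖ W` onto `[m]^k`. -/
def IsCRS {V : Type*} (G : SimpleGraph V) {k : ℕ} (w : Fin k → V) (m : ℕ) : Prop :=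
  Function.Injective w ∧ Set.range w ≠ Set.univ ∧
    Function.Injective
      (fun u : {u : V // u ∉ Set.range w} => fun i : Fin k => G.dist (w i) u.1) ∧
    Set.range (fun u : {u : V // u ∉ Set.range w} => fun i : Fin k => G.dist (w i) u.1) =
      {x : Fin k → ℕ | ∀ i, 1 ≤ x i ∧ x i ≤ m}

/-- `G` is a `(k, m)`-completeness-resolvable graph. -/
def IsCRG {V : Type*} (G : SimpleGraph V) (k m : ℕ) : Prop :=
  ∃ w : Fin k → V, IsCRS G w m

/-- `G` is completeness-resolvable. -/
def CompletenessResolvable {V : Type*} (G : SimpleGraph V) : Prop :=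
  ∃ (k m : ℕ) (w : Fin k → V), IsCRS G w m

/-! ### The family `B_k`.
Tuples in `[2]^k` are modelled as functions `Fin k → Fin 2`, the `Fin 2`-value `j`
corresponding to the entry `j + 1 ∈ {1, 2}`. -/

/-- The graph `H1 ∘ H2` on `[k] ⊔ [2]^k`. -/
def comp2 {k : ℕ} (H1 : SimpleGraph (Fin k)) (H2 : SimpleGraph (Fin k → Fin 2)) :
    SimpleGraph (Fin k ⊕ (Fin k → Fin 2)) where
  Adj a b :=
    match a, b with
    | Sum.inl i, Sum.inl j => H1.Adj i j
    | Sum.inr x, Sum.inr y => H2.Adj x y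
    | Sum.inl i, Sum.inr x => x i = 0
    | Sum.inr x, Sum.inl i => x i = 0
  symm := by
    constructor
    rintro (i | x) (j | y) h
    · exact H1.adj_symm h
    · exact h
    · exact h
    · exact H2.adj_symm h
  loopless := by
    constructor
    rintro (i | x) h
    · exact H1.irrefl h
    · exact H2.irrefl h

/-- The defining condition of `B_k`: for each `i`, the edges of `H2` lying in the complete
bipartite graph `B_i^k` (i.e. joining a tuple with `i`-th entry `1` to one with `i`-th entry `2`)
cover every tuple all of whose entries on the closed neighbourhood of `i` in `H1` equal `2`. -/
def BCond {k : ℕ} (H1 : SimpleGraph (Fin k)) (H2 : SimpleGraph (Fin k → Fin 2)) : Prop :=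
  ∀ (i : Fin k) (x : Fin k → Fin 2),
    (∀ j : Fin k, (j = i ∨ H1.Adj i j) → x j = 1) →
    ∃ y : Fin k → Fin 2, H2.Adj x y ∧ y i ≠ x i

/-- The family `B_k`, as a set of graphs on `[k] ⊔ [2]^k`. -/
def Bset (k : ℕ) : Set (SimpleGraph (Fin k ⊕ (Fin k → Fin 2))) :=
  {G | ∃ H1 H2, BCond H1 H2 ∧ G = comp2 H1 H2}

/-- `H2` is `H1`-minimal. -/
def H1Minimal {k : ℕ} (H1 : SimpleGraph (Fin k)) (H2 : SimpleGraph (Fin k → Fin 2)) : Prop :=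
  comp2 H1 H2 ∈ Bset k ∧
    ∀ H2' : SimpleGraph (Fin k → Fin 2), H2' < H2 → comp2 H1 H2' ∉ Bset k

/-- The graph `U_k` on `[2]^k`, with unique edge `{(1,…,1), (2,…,2)}`. -/
def Uk (k : ℕ) : SimpleGraph (Fin k → Fin 2) :=
  SimpleGraph.fromEdgeSet {s(fun _ => (0 : Fin 2), fun _ => (1 : Fin 2))}

/-- The graph `V_k` on `[2]^k`, whose edges join `(2,…,2)` to the tuples having exactly one
entry equal to `1`. -/
def Vk (k : ℕ) : SimpleGraph (Fin k → Fin 2) :=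
  SimpleGraph.fromEdgeSet
    {e | ∃ i : Fin k, e = s(Function.update (fun _ => (1 : Fin 2)) i 0, fun _ => (1 : Fin 2))}

/-- The graph `R_k` on `[2]^k`: the perfect matching pairing each tuple with its complement. -/
def Rk (k : ℕ) : SimpleGraph (Fin k → Fin 2) :=
  SimpleGraph.fromRel fun x y => ∀ i, x i ≠ y i

/-- The hypercube graph `Q_k` on `[2]^k`: tuples are adjacent when they differ in exactly one
coordinate. -/
def Qk (k : ℕ) : SimpleGraph (Fin k → Fin 2) :=
  SimpleGraph.fromRel fun x y => ∃ i, x i ≠ y i ∧ ∀ j, j ≠ i → x j = y j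

/-! ### The family `C_k`.
Tuples in `[3]^k` are modelled as functions `Fin k → Fin 3`, the `Fin 3`-value `j`
corresponding to the entry `j + 1 ∈ {1, 2, 3}`. -/

/-- Entries `a` and `b` (of `{1,2,3}`, coded in `Fin 3`) satisfy `|a - b| ≤ 1`. -/
def near3 (a b : Fin 3) : Prop := (a : ℕ) ≤ (b : ℕ) + 1 ∧ (b : ℕ) ≤ (a : ℕ) + 1

/-- `{x, y}` is an edge of the bipartite graph `C_i^k` (between `i`-th entry `1` and
`i`-th entry `2`, with all other entries differing by at most `1`). -/
def CAdj {k : ℕ} (i : Fin k) (x y : Fin k → Fin 3) : Prop :=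
  ((x i = 0 ∧ y i = 1) ∨ (x i = 1 ∧ y i = 0)) ∧ ∀ t, t ≠ i → near3 (x t) (y t)

/-- `{x, y}` is an edge of the bipartite graph `D_i^k` (between `i`-th entry `2` and
`i`-th entry `3`, with all other entries differing by at most `1`). -/
def DAdj {k : ℕ} (i : Fin k) (x y : Fin k → Fin 3) : Prop :=
  ((x i = 1 ∧ y i = 2) ∨ (x i = 2 ∧ y i = 1)) ∧ ∀ t, t ≠ i → near3 (x t) (y t)

/-- The graph `K̄_[k] ∘ H2` on `[k] ⊔ [3]^k`. -/
def comp3 {k : ℕ} (H2 : SimpleGraph (Fin k → Fin 3)) :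
    SimpleGraph (Fin k ⊕ (Fin k → Fin 3)) where
  Adj a b :=
    match a, b with
    | Sum.inl _, Sum.inl _ => False
    | Sum.inr x, Sum.inr y => H2.Adj x y
    | Sum.inl i, Sum.inr x => x i = 0
    | Sum.inr x, Sum.inl i => x i = 0
  symm := by
    constructor
    rintro (i | x) (j | y) h
    · exact h
    · exact h
    · exact h
    · exact H2.adj_symm h
  loopless := by
    constructor
    rintro (i | x) h
    · exact h
    · exact H2.irrefl h

/-- The defining condition of `C_k`: every edge of `H2` lies in some `C_i^k` or `D_i^k`;
for each `i` the edges of `H2` in `C_i^k` cover `[3]^k_i(2)`, and the edges of `H2` in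
`D_i^k` cover `S_i^k`. -/
def CCond {k : ℕ} (H2 : SimpleGraph (Fin k → Fin 3)) : Prop :=
  (∀ x y, H2.Adj x y → ∃ i, CAdj i x y ∨ DAdj i x y) ∧
  (∀ (i : Fin k) (x : Fin k → Fin 3), x i = 1 → ∃ y, H2.Adj x y ∧ CAdj i x y) ∧
  (∀ (i : Fin k) (x : Fin k → Fin 3), x i = 2 → (∀ t, x t ≠ 0) →
    ∃ y, H2.Adj x y ∧ DAdj i x y)

/-- The family `C_k`, as a set of graphs on `[k] ⊔ [3]^k`. -/
def Cset (k : ℕ) : Set (SimpleGraph (Fin k ⊕ (Fin k → Fin 3))) :=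
  {G | ∃ H2, CCond H2 ∧ G = comp3 H2}

/-- The graph `Γ_k` on `[3]^k`: distinct tuples are adjacent when all their entries differ
by at most `1`. -/
def GammaK (k : ℕ) : SimpleGraph (Fin k → Fin 3) :=
  SimpleGraph.fromRel fun x y => ∀ i, near3 (x i) (y i)

/-- `H2` is `k`-minimal. -/
def KMinimalC {k : ℕ} (H2 : SimpleGraph (Fin k → Fin 3)) : Prop :=
  comp3 H2 ∈ Cset k ∧
    ∀ H2' : SimpleGraph (Fin k → Fin 3), H2' < H2 → comp3 H2' ∉ Cset k

/-! If `W = {w_1,…,w_k}` is a `(k,2)`-CRS, every vertex outside `W` is identified with its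
distance vector in `[2]^k`, so the vertex set is `[k] ⊔ [2]^k` and `i` is adjacent to `x` iff
`x_(i) = 1`. What remains is `d(i,x) = 2` whenever `x_(i) = 2`, i.e. a common neighbour of `i`
and `x`: some `j ∈ H1(i)` with `x_(j) = 1`, or a tuple `y` adjacent to `x` with `y_(i) = 1`.
When no such `j` exists, the covering condition of `B_k` is exactly what provides `y`. -/

namespace SimpleGraph

variable {V W : Type*} {G : SimpleGraph V} {H : SimpleGraph W}

lemma Hom.edist_le (f : G →g H) (u v : V) : H.edist (f u) (f v) ≤ G.edist u v := by
  by_cases huv : G.Reachable u v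
  · obtain ⟨p, hp⟩ := exists_walk_of_edist_eq_coe huv.coe_dist_eq_edist.symm
    calc H.edist (f u) (f v) ≤ (p.map f).length := SimpleGraph.edist_le _
      _ = G.edist u v := by rw [Walk.length_map, hp, huv.coe_dist_eq_edist]
  · rw [edist_eq_top_of_not_reachable huv]
    exact le_top

lemma Iso.edist_eq (e : G ≃g H) (u v : V) : H.edist (e u) (e v) = G.edist u v :=
  le_antisymm (Hom.edist_le e.toHom u v) <| by
    simpa using Hom.edist_le e.symm.toHom (e u) (e v)

lemma Iso.dist_eq (e : G ≃g H) (u v : V) : H.dist (e u) (e v) = G.dist u v := by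
  rw [dist, dist, e.edist_eq]

lemma dist_eq_two_iff {u v : V} :
    G.dist u v = 2 ↔ u ≠ v ∧ ¬G.Adj u v ∧ (G.commonNeighbors u v).Nonempty := by
  rw [dist, ENat.toNat_eq_iff two_ne_zero]
  exact edist_eq_two_iff

end SimpleGraph

section comp2

variable {k : ℕ} {H1 : SimpleGraph (Fin k)} {H2 : SimpleGraph (Fin k → Fin 2)}

@[simp] lemma comp2_adj_inl_inr {i : Fin k} {x : Fin k → Fin 2} :
    (comp2 H1 H2).Adj (Sum.inl i) (Sum.inr x) ↔ x i = 0 := Iff.rfl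

@[simp] lemma comp2_adj_inr_inl {i : Fin k} {x : Fin k → Fin 2} :
    (comp2 H1 H2).Adj (Sum.inr x) (Sum.inl i) ↔ x i = 0 := Iff.rfl

lemma comp2_dist_inl_inr (hB : BCond H1 H2) (i : Fin k) (x : Fin k → Fin 2) :
    (comp2 H1 H2).dist (Sum.inl i) (Sum.inr x) = x i + 1 := by
  obtain hx | hx : x i = 0 ∨ x i = 1 := by omega
  · rw [hx, Fin.val_zero, zero_add, dist_eq_one_iff_adj]
    exact comp2_adj_inl_inr.mpr hx
  rw [hx, Fin.val_one, dist_eq_two_iff]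
  refine ⟨Sum.inl_ne_inr, by simp [hx], ?_⟩
  by_cases hcov : ∀ j, (j = i ∨ H1.Adj i j) → x j = 1
  · obtain ⟨y, hxy, hyi⟩ := hB i x hcov
    exact ⟨Sum.inr y, (mem_commonNeighbors _).mpr ⟨comp2_adj_inl_inr.mpr (by omega), hxy⟩⟩
  · push Not at hcov
    obtain ⟨j, hij, hxj⟩ := hcov
    have hji : H1.Adj i j := hij.resolve_left (by rintro rfl; exact hxj hx)
    exact ⟨Sum.inl j, (mem_commonNeighbors _).mpr ⟨hji, comp2_adj_inr_inl.mpr (by omega)⟩⟩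

end comp2

lemma mem_Bset_iff {k : ℕ} {H : SimpleGraph (Fin k ⊕ (Fin k → Fin 2))} :
    H ∈ Bset k ↔ ∀ i x, H.dist (Sum.inl i) (Sum.inr x) = x i + 1 := by
  constructor
  · rintro ⟨H1, H2, hB, rfl⟩
    exact comp2_dist_inl_inr hB
  intro hd
  have hadj : ∀ i x, H.Adj (Sum.inl i) (Sum.inr x) ↔ x i = 0 := by
    intro i x
    rw [← dist_eq_one_iff_adj, hd]
    omega
  refine ⟨H.comap Sum.inl, H.comap Sum.inr, ?_, ?_⟩
  · intro i x hx
    have hxi : x i = 1 := hx i (.inl rfl)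
    obtain ⟨-, -, z, hz⟩ := dist_eq_two_iff.mp ((hd i x).trans (by rw [hxi]; rfl))
    rw [mem_commonNeighbors] at hz
    rcases z with j | y
    · have hxj0 : x j = 0 := (hadj j x).mp (H.adj_symm hz.2)
      have hxj1 : x j = 1 := hx j (.inr hz.1)
      omega
    · exact ⟨y, hz.2, by rw [(hadj i y).mp hz.1, hxi]; decide⟩
  · ext (i | x) (j | y)
    · rfl
    · exact hadj i y
    · exact (H.adj_comm _ _).trans (hadj j x)
    · rfl

def tupleEquivBox (k : ℕ) : (Fin k → Fin 2) ≃ {x : Fin k → ℕ | ∀ i, 1 ≤ x i ∧ x i ≤ 2} where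
  toFun x := ⟨fun i => x i + 1, fun i => by dsimp only; omega⟩
  invFun x i := ⟨x.1 i - 1, by have := x.2 i; omega⟩
  left_inv x := by ext i; simp
  right_inv x := by ext i; have := x.2 i; simp; omega

section IsCRS

variable {V : Type*} {G : SimpleGraph V} {k m : ℕ} {w : Fin k → V}

noncomputable def IsCRS.outsideEquiv (hw : IsCRS G w m) :
    {u // u ∉ Set.range w} ≃ {x : Fin k → ℕ | ∀ i, 1 ≤ x i ∧ x i ≤ m} :=
  (Equiv.ofInjective _ hw.2.2.1).trans (Equiv.setCongr hw.2.2.2)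

lemma IsCRS.dist_outsideEquiv_symm (hw : IsCRS G w m)
    (x : {x : Fin k → ℕ | ∀ i, 1 ≤ x i ∧ x i ≤ m}) (i : Fin k) :
    G.dist (w i) (hw.outsideEquiv.symm x).1 = x.1 i :=
  congrFun (congrArg Subtype.val (hw.outsideEquiv.apply_symm_apply x)) i

lemma isCRS_two_iff_exists_equiv :
    IsCRS G w 2 ↔ ∃ e : Fin k ⊕ (Fin k → Fin 2) ≃ V,
      (∀ i, e (Sum.inl i) = w i) ∧ ∀ i x, G.dist (w i) (e (Sum.inr x)) = x i + 1 := by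
  constructor
  · intro hw
    classical
    refine ⟨(Equiv.sumCongr (Equiv.ofInjective w hw.1)
      ((tupleEquivBox k).trans hw.outsideEquiv.symm)).trans (Equiv.sumCompl (· ∈ Set.range w)),
      fun i => rfl, fun i x => hw.dist_outsideEquiv_symm _ i⟩
  rintro ⟨e, he, hd⟩
  have hw : w = e ∘ Sum.inl := funext fun i => (he i).symm
  have hnotin : ∀ x, e (Sum.inr x) ∉ Set.range w := by
    rintro x ⟨i, hi⟩
    exact Sum.inl_ne_inr (e.injective ((he i).trans hi))
  let ψ : (Fin k → Fin 2) → {u // u ∉ Set.range w} := fun x => ⟨e (Sum.inr x), hnotin x⟩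
  have hψ : Function.Surjective ψ := by
    rintro ⟨u, hu⟩
    obtain ⟨i | x, rfl⟩ := e.surjective u
    · exact absurd ⟨i, (he i).symm⟩ hu
    · exact ⟨x, rfl⟩
  have hdψ : (fun u : {u // u ∉ Set.range w} => fun i => G.dist (w i) u.1) ∘ ψ =
      Subtype.val ∘ tupleEquivBox k := funext fun x => funext (hd · x)
  refine ⟨hw ▸ e.injective.comp Sum.inl_injective, fun h => hnotin 0 (h ▸ trivial), ?_, ?_⟩
  · exact .of_comp_right (hdψ ▸ Subtype.val_injective.comp (tupleEquivBox k).injective) hψ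
  · rw [← hψ.range_comp, hdψ, EquivLike.range_comp, Subtype.range_coe]

end IsCRS

theorem isCRG_two_iff_general {V : Type*} (k : ℕ) (G : SimpleGraph V) :
    IsCRG G k 2 ↔ ∃ H ∈ Bset k, Nonempty (G ≃g H) := by
  constructor
  · rintro ⟨w, hw⟩
    obtain ⟨e, he, hd⟩ := isCRS_two_iff_exists_equiv.mp hw
    refine ⟨G.comap e, mem_Bset_iff.mpr fun i x => ?_, ⟨(Iso.comap e G).symm⟩⟩
    rw [← (Iso.comap e G).dist_eq, Iso.comap_apply, Iso.comap_apply, he, hd]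
  · rintro ⟨H, hH, ⟨φ⟩⟩
    refine ⟨fun i => φ.symm (Sum.inl i),
      isCRS_two_iff_exists_equiv.mpr ⟨φ.symm.toEquiv, fun i => rfl, fun i x => ?_⟩⟩
    exact (φ.symm.dist_eq _ _).trans (mem_Bset_iff.mp hH i x)

/-- **Proposition.** For `k ≥ 2`, a finite connected simple graph `G` is a `(k,2)`-CRG iff
`G` is isomorphic to a graph in `B_k`. -/
theorem isCRG_two_iff {V : Type*} [Fintype V] (k : ℕ) (hk : 2 ≤ k) (G : SimpleGraph V)
    (hconn : G.Connected) (hcard : 2 ≤ Fintype.card V) :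
    IsCRG G k 2 ↔ ∃ H ∈ Bset k, Nonempty (G ≃g H) :=
  isCRG_two_iff_general k G
end

section
/- For a positive integer k, a finite connected simple graph G is a (k,1)-completeness-resolvable graph if and only if G has exactly k+1 vertices and G has a universal vertex (a vertex adjacent to every other vertex of G). -/
open SimpleGraph

section CompletenessResolving

variable {V : Type*} {G : SimpleGraph V} {k : ℕ} {w : Fin k → V}

lemma setOf_forall_one_le_and_le_one :
    {x : Fin k → ℕ | ∀ i, 1 ≤ x i ∧ x i ≤ 1} = {fun _ => 1} := by
  ext x
  simp only [Set.mem_ofPred_eq, Set.mem_singleton_iff, funext_iff, ← le_antisymm_iff]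
  exact forall_congr' fun _ => eq_comm

/-- With `m = 1` every vertex outside `W` is at distance `1` from all of `W`, so injectivity of
`Ψ_W` leaves exactly one such vertex, and it is adjacent to everything else. -/
lemma isCRS_one_iff :
    IsCRS G w 1 ↔ Function.Injective w ∧ ∃ v, Set.range w = {v}ᶜ ∧ ∀ u, u ≠ v → G.Adj v u := by
  simp only [IsCRS, setOf_forall_one_le_and_le_one]
  constructor
  · rintro ⟨hw, hne, hΨ, hrange⟩
    obtain ⟨v, hv⟩ : ∃ v, v ∉ Set.range w := by
      simpa [Set.eq_univ_iff_forall] using hne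
    have hΨv : ∀ u (hu : u ∉ Set.range w), (fun i => G.dist (w i) u) = fun _ => 1 :=
      fun u hu => hrange.subset ⟨⟨u, hu⟩, rfl⟩
    have huniq : ∀ u, u ∉ Set.range w → u = v := fun u hu =>
      congrArg Subtype.val (@hΨ ⟨u, hu⟩ ⟨v, hv⟩ ((hΨv u hu).trans (hΨv v hv).symm))
    refine ⟨hw, v, ?_, ?_⟩
    · ext u
      exact ⟨fun hu huv => hv (huv ▸ hu), fun hu => not_not.mp (mt (huniq u) hu)⟩
    · intro u hu
      obtain ⟨i, rfl⟩ := not_not.mp (mt (huniq u) hu)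
      exact (dist_eq_one_iff_adj.mp (congrFun (hΨv v hv) i)).symm
  · rintro ⟨hw, v, hrange, hadj⟩
    have hout : ∀ u, u ∉ Set.range w ↔ u = v := by simp [hrange]
    have hΨv : (fun i => G.dist (w i) v) = fun _ => 1 := funext fun i =>
      dist_eq_one_iff_adj.mpr (hadj (w i) (hrange.subset ⟨i, rfl⟩)).symm
    refine ⟨hw, hrange ▸ Set.compl_ne_univ.mpr (Set.singleton_nonempty v), ?_, ?_⟩
    · exact fun a b _ => Subtype.ext (((hout a).mp a.2).trans ((hout b).mp b.2).symm)
    · refine Set.eq_singleton_iff_unique_mem.mpr ⟨⟨⟨v, (hout v).mpr rfl⟩, hΨv⟩, ?_⟩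
      rintro _ ⟨u, rfl⟩
      simpa only [(hout u).mp u.2] using hΨv

end CompletenessResolving

lemma exists_injective_range_eq_compl_singleton_iff {V : Type*} [Fintype V] (k : ℕ) (v : V) :
    (∃ w : Fin k → V, Function.Injective w ∧ Set.range w = {v}ᶜ) ↔ Fintype.card V = k + 1 := by
  classical
  have hcompl : Fintype.card ({v}ᶜ : Set V) = Fintype.card V - 1 := by
    rw [Fintype.card_compl_set, Set.card_singleton]
  constructor
  · rintro ⟨w, hw, hrange⟩
    have hcard := Set.card_range_of_injective hw
    simp only [hrange, hcompl, Fintype.card_fin] at hcard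
    have hpos := Fintype.card_pos_iff.mpr ⟨v⟩
    omega
  · intro hV
    let e := Fintype.equivFinOfCardEq (hcompl.trans (by omega) : _ = k)
    refine ⟨Subtype.val ∘ e.symm, Subtype.val_injective.comp e.symm.injective, ?_⟩
    rw [Set.range_comp, e.symm.range_eq_univ, Set.image_univ, Subtype.range_coe]

theorem isCRG_m_one_iff_general {V : Type*} [Fintype V] (k : ℕ) (G : SimpleGraph V) :
    IsCRG G k 1 ↔ Fintype.card V = k + 1 ∧ ∃ v : V, ∀ u : V, u ≠ v → G.Adj v u := by
  calc IsCRG G k 1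
      ↔ ∃ v, (∃ w : Fin k → V, Function.Injective w ∧ Set.range w = {v}ᶜ) ∧
          ∀ u, u ≠ v → G.Adj v u := by
        simp only [IsCRG, isCRS_one_iff]
        exact ⟨fun ⟨w, hw, v, hr, ha⟩ => ⟨v, ⟨w, hw, hr⟩, ha⟩,
          fun ⟨v, ⟨w, hw, hr⟩, ha⟩ => ⟨w, hw, v, hr, ha⟩⟩
    _ ↔ _ := by simp only [exists_injective_range_eq_compl_singleton_iff, exists_and_left]

/-- **Proposition.** For a positive integer `k`, a finite connected simple graph `G` is a
`(k,1)`-CRG iff `G` has exactly `k + 1` vertices and a universal vertex. -/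
theorem isCRG_m_one_iff {V : Type*} [Fintype V] (k : ℕ) (hk : 1 ≤ k) (G : SimpleGraph V)
    (hconn : G.Connected) (hcard : 2 ≤ Fintype.card V) :
    IsCRG G k 1 ↔ Fintype.card V = k + 1 ∧ ∃ v : V, ∀ u : V, u ≠ v → G.Adj v u :=
  isCRG_m_one_iff_general k G
end

section
/- Let k ≥ 2 and let H be a graph in C_k. Then H is a (k,3)-completeness-resolvable graph; in fact the set [k] of vertices is a (k,3)-completeness-resolving set of H. -/
open SimpleGraph

/-! Coding `{1,2,3}` by `Fin 3`, the claim is that `d(i, x) = x i + 1` for every vertex `i ∈ [k]`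
and tuple `x`, so that `Ψ_[k]` is the bijection `x ↦ x + 1` onto `[3]^k`.

Upper bound: a tuple with `i`-th entry `3` either has an entry `1`, say at `t`, and is reached
from `i` through the all-ones tuple and `t`, or lies in `S^k_i` and has a `D^k_i`-neighbour with
`i`-th entry `2`; that one, like every tuple with `i`-th entry `2`, has a `C^k_i`-neighbour with
`i`-th entry `1`, which is adjacent to `i`.

Lower bound: every edge of `H2` changes each entry by at most one, so the closed form above,
extended by `0` at `i` and by `2` on the rest of `[k]`, is `1`-Lipschitz along the edges. -/

namespace SimpleGraph

variable {V : Type*} {G : SimpleGraph V}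

lemma edist_le_edist_add_one_of_adj {u v w : V} (h : G.Adj v w) :
    G.edist u w ≤ G.edist u v + 1 :=
  (G.edist_triangle).trans_eq (by rw [edist_eq_one_iff_adj.mpr h])

lemma Walk.apply_le_apply_add_length (f : V → ℕ) (hf : ∀ u v, G.Adj u v → f v ≤ f u + 1)
    {u v : V} (p : G.Walk u v) : f v ≤ f u + p.length := by
  induction p with
  | nil => simp
  | cons h _ ih => grind [Walk.length_cons, hf _ _ h]

lemma apply_le_apply_add_edist (f : V → ℕ) (hf : ∀ u v, G.Adj u v → f v ≤ f u + 1)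
    (u v : V) : (f v : ℕ∞) ≤ f u + G.edist u v := by
  by_cases hr : G.Reachable u v
  · obtain ⟨p, hp⟩ := hr.exists_walk_length_eq_edist
    rw [← hp]
    exact_mod_cast p.apply_le_apply_add_length f hf
  · simp [edist_eq_top_of_not_reachable hr]

end SimpleGraph

lemma CAdj.near3 {k : ℕ} {i : Fin k} {x y : Fin k → Fin 3} (h : CAdj i x y) (t : Fin k) :
    near3 (x t) (y t) := by
  rcases eq_or_ne t i with rfl | ht
  · rcases h.1 with ⟨hx, hy⟩ | ⟨hx, hy⟩ <;> simp [_root_.near3, hx, hy]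
  · exact h.2 t ht

lemma DAdj.near3 {k : ℕ} {i : Fin k} {x y : Fin k → Fin 3} (h : DAdj i x y) (t : Fin k) :
    near3 (x t) (y t) := by
  rcases eq_or_ne t i with rfl | ht
  · rcases h.1 with ⟨hx, hy⟩ | ⟨hx, hy⟩ <;> simp [_root_.near3, hx, hy]
  · exact h.2 t ht

namespace CCond

variable {k : ℕ} {H2 : SimpleGraph (Fin k → Fin 3)}

lemma near3_of_adj (hC : CCond H2) {x y : Fin k → Fin 3} (h : H2.Adj x y) (t : Fin k) :
    near3 (x t) (y t) := by
  obtain ⟨i, hi | hi⟩ := hC.1 x y h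
  exacts [hi.near3 t, hi.near3 t]

lemma exists_adj_apply_eq_zero (hC : CCond H2) {i : Fin k} {x : Fin k → Fin 3} (hx : x i = 1) :
    ∃ y, H2.Adj x y ∧ y i = 0 := by
  obtain ⟨y, hxy, hy⟩ := hC.2.1 i x hx
  exact ⟨y, hxy, by rcases hy.1 with ⟨h, -⟩ | ⟨-, h⟩ <;> simp_all⟩

lemma exists_adj_apply_eq_one (hC : CCond H2) {i : Fin k} {x : Fin k → Fin 3} (hx : x i = 2)
    (hx0 : ∀ t, x t ≠ 0) : ∃ y, H2.Adj x y ∧ y i = 1 := by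
  obtain ⟨y, hxy, hy⟩ := hC.2.2 i x hx hx0
  exact ⟨y, hxy, by rcases hy.1 with ⟨h, -⟩ | ⟨-, h⟩ <;> simp_all⟩

end CCond

section comp3

variable {k : ℕ} {H2 : SimpleGraph (Fin k → Fin 3)}

@[simp] lemma comp3_adj_inl_inr {i : Fin k} {x : Fin k → Fin 3} :
    (comp3 H2).Adj (.inl i) (.inr x) ↔ x i = 0 := Iff.rfl

@[simp] lemma comp3_adj_inr_inr {x y : Fin k → Fin 3} :
    (comp3 H2).Adj (.inr x) (.inr y) ↔ H2.Adj x y := Iff.rfl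

/-- The distance from `inl i`, in closed form. -/
def comp3Potential (i : Fin k) : Fin k ⊕ (Fin k → Fin 3) → ℕ
  | .inl j => if j = i then 0 else 2
  | .inr x => x i + 1

lemma comp3Potential_le_of_adj (hC : CCond H2) (i : Fin k) :
    ∀ u v, (comp3 H2).Adj u v → comp3Potential i v ≤ comp3Potential i u + 1
  | .inl _, .inl _, h => h.elim
  | .inl j, .inr x, h => by
    have := (x i).isLt
    by_cases hj : j = i <;> simp_all [comp3Potential]
  | .inr _, .inl j, _ => by by_cases hj : j = i <;> simp [comp3Potential, hj]
  | .inr _, .inr _, h => by simpa [comp3Potential] using (hC.near3_of_adj h i).2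

lemma edist_inl_inr_le_one {i : Fin k} {x : Fin k → Fin 3} (hx : x i = 0) :
    (comp3 H2).edist (.inl i) (.inr x) ≤ 1 :=
  (edist_eq_one_iff_adj.mpr hx).le

lemma CCond.edist_inl_inr_le_two (hC : CCond H2) {i : Fin k} {x : Fin k → Fin 3} (hx : x i = 1) :
    (comp3 H2).edist (.inl i) (.inr x) ≤ 2 := by
  obtain ⟨y, hxy, hy⟩ := hC.exists_adj_apply_eq_zero hx
  calc _ ≤ (comp3 H2).edist (.inl i) (.inr y) + 1 :=
        edist_le_edist_add_one_of_adj (comp3_adj_inr_inr.mpr hxy.symm)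
    _ ≤ 1 + 1 := by gcongr; exact edist_inl_inr_le_one hy
    _ = 2 := by norm_num

lemma CCond.edist_inl_inr_le_three (hC : CCond H2) {i : Fin k} {x : Fin k → Fin 3}
    (hx : x i = 2) : (comp3 H2).edist (.inl i) (.inr x) ≤ 3 := by
  by_cases hx0 : ∃ t, x t = 0
  · obtain ⟨t, ht⟩ := hx0
    -- route through the all-ones tuple `0` and the vertex `inl t`
    calc _ ≤ (comp3 H2).edist (.inl i) (.inl t) + 1 :=
          edist_le_edist_add_one_of_adj (comp3_adj_inl_inr.mpr ht)
      _ ≤ ((comp3 H2).edist (.inl i) (.inr 0) + 1) + 1 := by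
          gcongr; exact edist_le_edist_add_one_of_adj (comp3_adj_inl_inr.mpr rfl).symm
      _ ≤ (1 + 1) + 1 := by gcongr; exact edist_inl_inr_le_one rfl
      _ = 3 := by norm_num
  · obtain ⟨y, hxy, hy⟩ := hC.exists_adj_apply_eq_one hx (not_exists.mp hx0)
    calc _ ≤ (comp3 H2).edist (.inl i) (.inr y) + 1 :=
          edist_le_edist_add_one_of_adj (comp3_adj_inr_inr.mpr hxy.symm)
      _ ≤ 2 + 1 := by gcongr; exact hC.edist_inl_inr_le_two hy
      _ = 3 := by norm_num

lemma CCond.edist_inl_inr_le (hC : CCond H2) (i : Fin k) (x : Fin k → Fin 3) :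
    (comp3 H2).edist (.inl i) (.inr x) ≤ x i + 1 :=
  match hx : x i with
  | 0 => (edist_inl_inr_le_one hx).trans_eq (by norm_num)
  | 1 => (hC.edist_inl_inr_le_two hx).trans_eq (by norm_num)
  | 2 => (hC.edist_inl_inr_le_three hx).trans_eq (by norm_num)

lemma CCond.dist_inl_inr (hC : CCond H2) (i : Fin k) (x : Fin k → Fin 3) :
    (comp3 H2).dist (.inl i) (.inr x) = x i + 1 := by
  have hlow := apply_le_apply_add_edist _ (comp3Potential_le_of_adj hC i) (.inl i) (.inr x)
  unfold SimpleGraph.dist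
  rw [le_antisymm (hC.edist_inl_inr_le i x) (by simpa [comp3Potential] using hlow)]
  exact ENat.toNat_natCast _

end comp3

lemma range_val_add_one {k m : ℕ} :
    Set.range (fun (x : Fin k → Fin m) (i : Fin k) => (x i : ℕ) + 1) =
      {f : Fin k → ℕ | ∀ i, 1 ≤ f i ∧ f i ≤ m} := by
  ext f
  constructor
  · rintro ⟨x, rfl⟩ i
    exact ⟨Nat.le_add_left 1 _, (x i).isLt⟩
  · intro hf
    refine ⟨fun i => ⟨f i - 1, by have := hf i; omega⟩, funext fun i => ?_⟩
    have := hf i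
    show f i - 1 + 1 = f i
    omega

lemma isCRS_inl_of_dist_inl_inr {k m : ℕ} (hm : 0 < m) (G : SimpleGraph (Fin k ⊕ (Fin k → Fin m)))
    (hG : ∀ i x, G.dist (.inl i) (.inr x) = x i + 1) : IsCRS G Sum.inl m := by
  refine ⟨Sum.inl_injective,
    (Set.ne_univ_iff_exists_notMem _).mpr ⟨.inr fun _ => ⟨0, hm⟩, by simp⟩, ?_, ?_⟩
  · rintro ⟨_ | x, hx⟩ ⟨_ | y, hy⟩ hxy
    · exact (hx ⟨_, rfl⟩).elim
    · exact (hx ⟨_, rfl⟩).elim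
    · exact (hy ⟨_, rfl⟩).elim
    · simp only [hG] at hxy
      obtain rfl : x = y := funext fun i => Fin.ext (by simpa using congrFun hxy i)
      rfl
  · rw [← range_val_add_one]
    ext f
    constructor
    · rintro ⟨⟨_ | x, hx⟩, rfl⟩
      · simp at hx
      · exact ⟨x, by simp [hG]⟩
    · rintro ⟨x, rfl⟩
      exact ⟨⟨.inr x, by simp⟩, by simp [hG]⟩

theorem mem_Cset_isCRG_general (k : ℕ) (H : SimpleGraph (Fin k ⊕ (Fin k → Fin 3)))
    (h : H ∈ Cset k) :
    IsCRG H k 3 ∧ IsCRS H (fun i : Fin k => (Sum.inl i : Fin k ⊕ (Fin k → Fin 3))) 3 := by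
  obtain ⟨H2, hC, rfl⟩ := h
  have hcrs := isCRS_inl_of_dist_inl_inr three_pos (comp3 H2) hC.dist_inl_inr
  exact ⟨⟨_, hcrs⟩, hcrs⟩

/-- **Lemma.** Every graph `H ∈ C_k` (`k ≥ 2`) is a `(k,3)`-CRG; in fact the set `[k]` of
vertices is a `(k,3)`-completeness-resolving set of `H`. -/
theorem mem_Cset_isCRG (k : ℕ) (hk : 2 ≤ k) (H : SimpleGraph (Fin k ⊕ (Fin k → Fin 3)))
    (h : H ∈ Cset k) :
    IsCRG H k 3 ∧ IsCRS H (fun i : Fin k => (Sum.inl i : Fin k ⊕ (Fin k → Fin 3))) 3 :=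
  mem_Cset_isCRG_general k H h
end

section
/- Let k ≥ 2 and let H2 be a graph on [2]^k that is K̄_[k]-minimal, where K̄_[k] is the edgeless graph on [k]. Then 2^{k−1} ≤ |E(H2)| ≤ k·2^{k−1}; moreover |E(H2)| = 2^{k−1} if and only if H2 = R_k, and |E(H2)| = k·2^{k−1} if and only if H2 = Q_k, the hypercube graph on [2]^k. -/
open SimpleGraph

/-!
With `H1` edgeless, `H1 ∘ H2 ∈ B_k` says that every pair `(x, i)` with `x_(i) = 2` (a *demand*)
is met by an edge `{x, y}` of `H2` with `y_(i) = 1`. The edge `{x, y}` meets exactly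
`hammingDist x y ≤ k` demands, one for each coordinate where `x` and `y` differ, and there are
`k · 2^(k-1)` demands. Minimality gives every edge a demand met by no other edge, so
`|E(H2)| ≤ k · 2^(k-1)`, while covering gives `k · 2^(k-1) ≤ ∑ hammingDist ≤ k · |E(H2)|`.
Equality in the lower bound forces every edge to join complementary tuples, so `H2 ≤ R_k`;
equality in the upper bound makes the private demands exhaust all demands, so every edge meets
only one demand and `H2 ≤ Q_k`. Since `R_k` and `Q_k` have `2^(k-1)` and `k · 2^(k-1)` edges,
the inclusions are equalities.
-/

open Finset

section PrivateCover

variable {α β : Type*} {s : Finset α} {t : Finset β} {S : α → Finset β}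

theorem card_le_card_of_forall_exists_private (hS : ∀ e ∈ s, S e ⊆ t)
    (hpriv : ∀ e ∈ s, ∃ p ∈ S e, ∀ e' ∈ s, p ∈ S e' → e' = e) : #s ≤ #t := by
  choose f hfS hf using hpriv
  refine card_le_card_of_injective (f := fun e => ⟨f e e.2, hS e e.2 (hfS e e.2)⟩) ?_
  rintro ⟨e₁, h₁⟩ ⟨e₂, h₂⟩ heq
  have heq : f e₁ h₁ = f e₂ h₂ := congrArg Subtype.val heq
  exact Subtype.ext (hf e₁ h₁ e₂ h₂ (heq ▸ hfS e₂ h₂)).symm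

theorem card_le_one_of_forall_exists_private_of_card_eq (hS : ∀ e ∈ s, S e ⊆ t)
    (hpriv : ∀ e ∈ s, ∃ p ∈ S e, ∀ e' ∈ s, p ∈ S e' → e' = e) (hst : #s = #t) :
    ∀ e ∈ s, #(S e) ≤ 1 := by
  choose f hfS hf using hpriv
  have hsurj := surj_on_of_inj_on_of_card_le f (fun e he => hS e he (hfS e he))
    (fun e₁ e₂ h₁ h₂ heq => (hf e₁ h₁ e₂ h₂ (heq ▸ hfS e₂ h₂)).symm) hst.ge
  intro e he
  refine (card_le_card (t := {f e he}) fun p hp => ?_).trans (card_singleton _).le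
  obtain ⟨e', he', rfl⟩ := hsurj p (hS e he hp)
  obtain rfl := hf e' he' e he hp
  exact mem_singleton_self _

end PrivateCover

section Hamming

variable {ι : Type*} {β : ι → Type*} [Fintype ι] [∀ i, DecidableEq (β i)] {x y : ∀ i, β i}

theorem hammingDist_eq_card_iff : hammingDist x y = Fintype.card ι ↔ ∀ i, x i ≠ y i := by
  simp [hammingDist, ← card_univ, card_filter_eq_iff]

theorem hammingDist_eq_one_iff : hammingDist x y = 1 ↔ ∃ i, x i ≠ y i ∧ ∀ j ≠ i, x j = y j := by
  simp [hammingDist, card_eq_one, eq_singleton_iff_unique_mem, not_imp_comm]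

end Hamming

theorem eq_of_le_of_card_edgeFinset_le {V : Type*} {G G' : SimpleGraph V} [Fintype G.edgeSet]
    [Fintype G'.edgeSet] (hle : G ≤ G') (hcard : #G'.edgeFinset ≤ #G.edgeFinset) : G = G' :=
  edgeFinset_inj.1 (eq_of_subset_of_card_le (edgeFinset_mono hle) hcard)

section Demands

variable {k : ℕ}

def demands (k : ℕ) : Finset ((Fin k → Fin 2) × Fin k) := {p | p.1 p.2 = 1}

def servedBy (e : Sym2 (Fin k → Fin 2)) : Finset ((Fin k → Fin 2) × Fin k) :=
  {p | p.1 p.2 = 1 ∧ ∃ y, s(p.1, y) = e ∧ y p.2 = 0}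

theorem servedBy_subset_demands (e : Sym2 (Fin k → Fin 2)) : servedBy e ⊆ demands k :=
  monotone_filter_right _ fun _ _ => And.left

theorem mem_servedBy_mk {x y z : Fin k → Fin 2} {i : Fin k} :
    (z, i) ∈ servedBy s(x, y) ↔ z = x ∧ x i = 1 ∧ y i = 0 ∨ z = y ∧ y i = 1 ∧ x i = 0 := by
  simp only [servedBy, mem_filter, mem_univ, true_and, Sym2.eq_iff]
  aesop

theorem card_servedBy_mk (x y : Fin k → Fin 2) : #(servedBy s(x, y)) = hammingDist x y := by
  have hfin : ∀ a b : Fin 2, a ≠ b ↔ a = 1 ∧ b = 0 ∨ b = 1 ∧ a = 0 := by decide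
  have himage :
      servedBy s(x, y) = Finset.image (fun i => (if x i = 1 then x else y, i)) {i | x i ≠ y i} := by
    ext ⟨z, i⟩
    simp only [mem_servedBy_mk, mem_image, mem_filter, mem_univ, true_and, Prod.mk.injEq, hfin]
    aesop
  rw [himage, card_image_of_injective _ fun i j h => congrArg Prod.snd h, hammingDist]

theorem card_servedBy_le (e : Sym2 (Fin k → Fin 2)) : #(servedBy e) ≤ k := by
  induction e using Sym2.ind with
  | _ x y => simpa [card_servedBy_mk] using hammingDist_le_card_fintype (x := x) (y := y)

theorem card_demands : #(demands k) = k * 2 ^ (k - 1) := by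
  rw [demands, card_filter, ← univ_product_univ, sum_product_right]
  simp_rw [← card_filter]
  have hfiber := fun i : Fin k => Fintype.card_filter_piFinset_const (univ : Finset (Fin 2)) i 1
  simp only [Fintype.piFinset_univ, mem_univ, if_true, card_univ, Fintype.card_fin] at hfiber
  simp [hfiber]

end Demands

section RkQk

variable {k : ℕ}

theorem Rk_adj_iff {x y : Fin k → Fin 2} : (Rk k).Adj x y ↔ x ≠ y ∧ hammingDist x y = k := by
  have hdist := hammingDist_eq_card_iff (x := x) (y := y)
  rw [Fintype.card_fin] at hdist
  simp [Rk, hdist, ne_comm]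

theorem Qk_adj_iff {x y : Fin k → Fin 2} : (Qk k).Adj x y ↔ hammingDist x y = 1 := by
  rw [Qk, fromRel_adj, ← hammingDist_eq_one_iff, ← hammingDist_eq_one_iff, hammingDist_comm y x,
    or_self, and_iff_right_iff_imp]
  rintro h rfl
  simp at h

instance : DecidableRel (Rk k).Adj := fun _ _ => decidable_of_iff' _ Rk_adj_iff

instance : DecidableRel (Qk k).Adj := fun _ _ => decidable_of_iff' _ Qk_adj_iff

theorem Rk_adj_iff_eq_add_one (hk : k ≠ 0) {x y : Fin k → Fin 2} :
    (Rk k).Adj x y ↔ y = x + 1 := by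
  have hfin : ∀ a b : Fin 2, a ≠ b ↔ b = a + 1 := by decide
  have hne : x ≠ x + 1 := fun h => by simpa using congrFun h ⟨0, Nat.pos_of_ne_zero hk⟩
  have hfun : (∀ i, y i = x i + 1) ↔ y = x + 1 := by simp [funext_iff]
  rw [Rk, fromRel_adj]
  simp only [ne_comm (a := y _), or_self, hfin, hfun]
  exact ⟨fun h => h.2, fun h => ⟨h ▸ hne, h⟩⟩

theorem Qk_adj_iff_exists_eq_add_single {x y : Fin k → Fin 2} :
    (Qk k).Adj x y ↔ ∃ i, y = x + Pi.single i 1 := by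
  have hfin : ∀ a b : Fin 2, a ≠ b ↔ b = a + 1 := by decide
  rw [Qk_adj_iff, hammingDist_eq_one_iff]
  refine exists_congr fun i => ⟨fun ⟨hi, hj⟩ => funext fun j => ?_, fun h => ?_⟩
  · rcases eq_or_ne j i with rfl | hji
    · simpa using (hfin _ _).1 hi
    · simp [hji, hj j hji]
  · subst h
    exact ⟨by simp [hfin], fun j hji => by simp [hji]⟩

theorem Rk_degree (hk : k ≠ 0) (x : Fin k → Fin 2) : (Rk k).degree x = 1 := by
  have hnbr : (Rk k).neighborFinset x = {x + 1} := by
    ext y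
    simp [Rk_adj_iff_eq_add_one hk]
  rw [← card_neighborFinset_eq_degree, hnbr, card_singleton]

theorem Qk_degree (x : Fin k → Fin 2) : (Qk k).degree x = k := by
  have hnbr : (Qk k).neighborFinset x = univ.image fun i => x + Pi.single i 1 := by
    ext y
    simp [Qk_adj_iff_exists_eq_add_single, eq_comm]
  have hinj : Function.Injective fun i : Fin k => x + Pi.single i 1 := by
    intro i j hij
    by_contra hne
    simpa [hne] using congrFun hij i
  rw [← card_neighborFinset_eq_degree, hnbr, card_image_of_injective _ hinj, card_univ,
    Fintype.card_fin]

theorem card_edgeFinset_Rk (hk : k ≠ 0) : #(Rk k).edgeFinset = 2 ^ (k - 1) := by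
  have h := sum_degrees_eq_twice_card_edges (Rk k)
  simp only [Rk_degree hk, sum_const, card_univ, Fintype.card_fun, Fintype.card_fin,
    smul_eq_mul] at h
  obtain ⟨k, rfl⟩ := Nat.exists_eq_succ_of_ne_zero hk
  rw [pow_succ] at h
  simp only [Nat.succ_sub_one]
  linarith

theorem card_edgeFinset_Qk : #(Qk k).edgeFinset = k * 2 ^ (k - 1) := by
  have h := sum_degrees_eq_twice_card_edges (Qk k)
  simp only [Qk_degree, sum_const, card_univ, Fintype.card_fun, Fintype.card_fin, smul_eq_mul] at h
  rcases k with _ | k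
  · simpa using h.symm
  · rw [pow_succ] at h
    simp only [add_tsub_cancel_right]
    linarith

end RkQk

section Minimal

variable {k : ℕ}

theorem comp2_injective : Function.Injective2 (comp2 (k := k)) := by
  intro H1 H1' H2 H2' h
  constructor <;> ext a b
  · exact iff_of_eq (congrArg (·.Adj (.inl a) (.inl b)) h)
  · exact iff_of_eq (congrArg (·.Adj (.inr a) (.inr b)) h)

theorem comp2_mem_Bset_iff {H1 : SimpleGraph (Fin k)} {H2 : SimpleGraph (Fin k → Fin 2)} :
    comp2 H1 H2 ∈ Bset k ↔ BCond H1 H2 := by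
  refine ⟨?_, fun h => ⟨H1, H2, h, rfl⟩⟩
  rintro ⟨H1', H2', h, heq⟩
  obtain ⟨rfl, rfl⟩ := comp2_injective heq
  exact h

theorem h1Minimal_iff {H1 : SimpleGraph (Fin k)} {H2 : SimpleGraph (Fin k → Fin 2)} :
    H1Minimal H1 H2 ↔ BCond H1 H2 ∧ ∀ H2' < H2, ¬BCond H1 H2' := by
  simp only [H1Minimal, comp2_mem_Bset_iff]

theorem bcond_bot_iff {H : SimpleGraph (Fin k → Fin 2)} :
    BCond ⊥ H ↔ ∀ p ∈ demands k, ∃ e ∈ H.edgeSet, p ∈ servedBy e := by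
  have hfin : ∀ a : Fin 2, a ≠ 1 ↔ a = 0 := by decide
  simp only [BCond, demands, servedBy, mem_filter, mem_univ, true_and, bot_adj, or_false,
    forall_eq, Prod.forall]
  refine forall_comm.trans (forall₂_congr fun x i => imp_congr_right fun hx => ?_)
  simp only [hx, hfin, true_and]
  constructor
  · rintro ⟨y, hxy, hy⟩
    exact ⟨s(x, y), hxy, y, rfl, hy⟩
  · rintro ⟨_, he, y, rfl, hy⟩
    exact ⟨y, he, hy⟩

namespace BCond

variable {H : SimpleGraph (Fin k → Fin 2)} [Fintype H.edgeSet]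

theorem card_demands_le_sum_card_servedBy (h : BCond ⊥ H) :
    #(demands k) ≤ ∑ e ∈ H.edgeFinset, #(servedBy e) := by
  refine (card_le_card fun p hp => ?_).trans card_biUnion_le
  simpa using bcond_bot_iff.1 h p hp

theorem two_pow_le_card_edgeFinset (h : BCond ⊥ H) (hk : k ≠ 0) :
    2 ^ (k - 1) ≤ #H.edgeFinset := by
  refine Nat.le_of_mul_le_mul_left ?_ (Nat.pos_of_ne_zero hk)
  calc k * 2 ^ (k - 1) = #(demands k) := card_demands.symm
    _ ≤ ∑ e ∈ H.edgeFinset, #(servedBy e) := h.card_demands_le_sum_card_servedBy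
    _ ≤ #H.edgeFinset • k := sum_le_card_nsmul _ _ _ fun e _ => card_servedBy_le e
    _ = k * #H.edgeFinset := by rw [smul_eq_mul, mul_comm]

theorem le_Rk (h : BCond ⊥ H) (hE : #H.edgeFinset = 2 ^ (k - 1)) : H ≤ Rk k := by
  have hsum : ∑ e ∈ H.edgeFinset, #(servedBy e) = ∑ _e ∈ H.edgeFinset, k := by
    refine le_antisymm (sum_le_sum fun e _ => card_servedBy_le e) ?_
    rw [sum_const, smul_eq_mul, hE, mul_comm, ← card_demands]
    exact h.card_demands_le_sum_card_servedBy
  have hall := (sum_eq_sum_iff_of_le fun e _ => card_servedBy_le e).1 hsum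
  intro x y hxy
  have hdist := hall s(x, y) (mem_edgeFinset.2 hxy)
  rw [card_servedBy_mk] at hdist
  exact Rk_adj_iff.2 ⟨hxy.ne, hdist⟩

end BCond

namespace H1Minimal

variable {H : SimpleGraph (Fin k → Fin 2)} [Fintype H.edgeSet]

theorem exists_private_demand (h : H1Minimal ⊥ H) :
    ∀ e ∈ H.edgeFinset, ∃ p ∈ servedBy e, ∀ e' ∈ H.edgeFinset, p ∈ servedBy e' → e' = e := by
  simp only [mem_edgeFinset]
  intro e he
  rw [h1Minimal_iff, bcond_bot_iff] at h
  obtain ⟨hcover, hmin⟩ := h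
  have hlt : H.deleteEdges {e} < H := by
    rw [← edgeSet_ssubset_edgeSet, edgeSet_deleteEdges]
    exact Set.sdiff_singleton_ssubset.2 he
  obtain ⟨p, hp, hunserved⟩ : ∃ p ∈ demands k, ∀ e' ∈ H.edgeSet \ {e}, p ∉ servedBy e' := by
    simpa [bcond_bot_iff, edgeSet_deleteEdges] using hmin _ hlt
  have honly : ∀ e' ∈ H.edgeSet, p ∈ servedBy e' → e' = e := fun e' he' hpe' =>
    by_contra fun hne => hunserved e' ⟨he', hne⟩ hpe'
  obtain ⟨e', he', hpe'⟩ := hcover p hp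
  exact ⟨p, honly e' he' hpe' ▸ hpe', honly⟩

theorem card_edgeFinset_le (h : H1Minimal ⊥ H) : #H.edgeFinset ≤ k * 2 ^ (k - 1) :=
  card_demands ▸ card_le_card_of_forall_exists_private (fun e _ => servedBy_subset_demands e)
    h.exists_private_demand

theorem le_Qk (h : H1Minimal ⊥ H) (hE : #H.edgeFinset = k * 2 ^ (k - 1)) : H ≤ Qk k := by
  have hall := card_le_one_of_forall_exists_private_of_card_eq
    (fun e _ => servedBy_subset_demands e) h.exists_private_demand (hE.trans card_demands.symm)
  intro x y hxy
  have hdist := hall s(x, y) (mem_edgeFinset.2 hxy)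
  rw [card_servedBy_mk] at hdist
  exact Qk_adj_iff.2 (le_antisymm hdist (hammingDist_pos.2 hxy.ne))

end H1Minimal

end Minimal

/-- **Corollary.** If `H2` is `K̄_[k]`-minimal (`k ≥ 2`), then
`2 ^ (k−1) ≤ |E(H2)| ≤ k · 2 ^ (k−1)`; moreover `|E(H2)| = 2 ^ (k−1)` iff `H2 = R_k`, and
`|E(H2)| = k · 2 ^ (k−1)` iff `H2 = Q_k` (the hypercube graph). -/
theorem nullMinimal_size (k : ℕ) (hk : 2 ≤ k) (H2 : SimpleGraph (Fin k → Fin 2))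
    [DecidableRel H2.Adj] (h : H1Minimal (⊥ : SimpleGraph (Fin k)) H2) :
    (2 ^ (k - 1) ≤ H2.edgeFinset.card ∧ H2.edgeFinset.card ≤ k * 2 ^ (k - 1)) ∧
    (H2.edgeFinset.card = 2 ^ (k - 1) ↔ H2 = Rk k) ∧
    (H2.edgeFinset.card = k * 2 ^ (k - 1) ↔ H2 = Qk k) := by
  have hk0 : k ≠ 0 := by omega
  have hB : BCond ⊥ H2 := (h1Minimal_iff.1 h).1
  refine ⟨⟨hB.two_pow_le_card_edgeFinset hk0, h.card_edgeFinset_le⟩, ⟨fun hE => ?_, ?_⟩,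
    ⟨fun hE => ?_, ?_⟩⟩
  · exact eq_of_le_of_card_edgeFinset_le (hB.le_Rk hE) (by rw [hE, card_edgeFinset_Rk hk0])
  · rintro rfl
    convert card_edgeFinset_Rk hk0
  · exact eq_of_le_of_card_edgeFinset_le (h.le_Qk hE) (by rw [hE, card_edgeFinset_Qk])
  · rintro rfl
    convert card_edgeFinset_Qk
end

section
/- Let k ≥ 2. If a graph H2 on [3]^k is k-minimal, then (3^k + 1)/2 ≤ |E(H2)| ≤ k·(3^{k−1} + 2^{k−1}). -/
open SimpleGraph

/-!
Lower bound: the covering conditions give an edge at every tuple having an entry `2`, and at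
`(3,…,3)`; the remaining tuples, those of `{1,3}^k ∖ {(3,…,3)}`, are as many as the tuples `t` of
`T = {2,3}^k ∖ {(3,…,3)}`. Each such `t` has degree at least `2`, or else its only neighbour is
`t − (1,…,1)`, which then has one neighbour more than the covering conditions demand. Since
`t ↦ t − (1,…,1)` is injective and leaves `{2,3}^k`, summing degrees gives `2|E| ≥ 3^k`, and
`3^k` is odd.

Upper bound: by minimality every edge is the only edge meeting one of the covering demands
(a `C_i^k`-edge at a tuple of `[3]^k_i(2)`, a `D_i^k`-edge at a tuple of `S_i^k`), so distinct
edges have distinct demands, and there are `k (3^(k-1) + 2^(k-1))` demands.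
-/

open Finset

theorem Finset.card_le_sum_of_pos_add_comp {α : Type*} [Fintype α] [DecidableEq α]
    {s : Finset α} {p : α → α} (f : α → ℕ) (hp : Set.InjOn p s)
    (hdisj : Disjoint s (s.image p)) (hs : ∀ a ∈ s, 0 < f a + f (p a)) :
    #s ≤ ∑ a, f a :=
  calc #s = ∑ a ∈ s, 1 := card_eq_sum_ones s
    _ ≤ ∑ a ∈ s, (f a + f (p a)) := sum_le_sum hs
    _ = ∑ a ∈ s ∪ s.image p, f a := by rw [sum_add_distrib, sum_union hdisj, sum_image hp]
    _ ≤ ∑ a, f a := sum_le_sum_of_subset (subset_univ _)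

namespace SimpleGraph

variable {V : Type*} [Fintype V] (G : SimpleGraph V) [DecidableRel G.Adj]

theorem card_add_card_le_two_mul_card_edgeFinset [DecidableEq V] {C T : Finset V} {p : V → V}
    (hC : ∀ v ∈ C, 0 < G.degree v) (hp : Set.InjOn p T) (hdisj : Disjoint T (T.image p))
    (hT : ∀ t ∈ T, (if t ∈ C then 1 else 0) < G.degree t ∨
      (if p t ∈ C then 1 else 0) < G.degree (p t)) :
    #C + #T ≤ 2 * #G.edgeFinset := by
  set surplus : V → ℕ := fun v => G.degree v - if v ∈ C then 1 else 0
  have hdeg : ∀ v, G.degree v = surplus v + if v ∈ C then 1 else 0 := by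
    intro v
    by_cases hv : v ∈ C
    · have := hC v hv
      simp only [surplus, hv, if_true]
      omega
    · simp [surplus, hv]
  have hsurplus : #T ≤ ∑ v, surplus v :=
    card_le_sum_of_pos_add_comp surplus hp hdisj fun t ht => by
      rcases hT t ht with h | h <;> simp only [surplus] <;> omega
  calc #C + #T ≤ #C + ∑ v, surplus v := Nat.add_le_add_left hsurplus _
    _ = ∑ v, G.degree v := by simp [hdeg, sum_add_distrib, add_comm]
    _ = 2 * #G.edgeFinset := G.sum_degrees_eq_twice_card_edges

theorem card_edgeFinset_le_card_of_forall_private {δ : Type*} {D : Finset δ} {src : δ → V}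
    {R : δ → V → Prop} (hcov : ∀ d ∈ D, ∃ y, G.Adj (src d) y ∧ R d y)
    (hpriv : ∀ e ∈ G.edgeSet, ∃ d ∈ D, ∀ y, G.Adj (src d) y → R d y → s(src d, y) = e) :
    #G.edgeFinset ≤ #D := by
  refine card_le_card_of_forall_subsingleton
    (fun e d => ∀ y, G.Adj (src d) y → R d y → s(src d, y) = e)
    (fun e he => hpriv e (mem_edgeFinset.mp he)) ?_
  rintro d hd e ⟨-, he⟩ e' ⟨-, he'⟩
  obtain ⟨y, hy, hR⟩ := hcov d hd
  exact (he y hy hR).symm.trans (he' y hy hR)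

end SimpleGraph

variable {k : ℕ}

theorem comp3_injective : Function.Injective (comp3 (k := k)) := fun A B h => by
  ext x y
  exact Iff.of_eq (congrFun (congrFun (congrArg SimpleGraph.Adj h) (.inr x)) (.inr y))

theorem comp3_mem_Cset_iff {H : SimpleGraph (Fin k → Fin 3)} : comp3 H ∈ Cset k ↔ CCond H :=
  ⟨fun ⟨_, hc, he⟩ => comp3_injective he ▸ hc, fun hc => ⟨H, hc, rfl⟩⟩

variable {H2 : SimpleGraph (Fin k → Fin 3)}

theorem KMinimalC.cCond (h : KMinimalC H2) : CCond H2 := comp3_mem_Cset_iff.mp h.1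

theorem KMinimalC.not_cCond_of_lt (h : KMinimalC H2) {H : SimpleGraph (Fin k → Fin 3)}
    (hlt : H < H2) : ¬ CCond H :=
  fun hc => h.2 H hlt (comp3_mem_Cset_iff.mpr hc)

/-- The tuples with no entry `a`; `avoiding k 0` is the paper's `{2,3}^k`. -/
def avoiding (k : ℕ) (a : Fin 3) : Finset (Fin k → Fin 3) := Fintype.piFinset fun _ => {a}ᶜ

theorem mem_avoiding {a : Fin 3} {x : Fin k → Fin 3} : x ∈ avoiding k a ↔ ∀ i, x i ≠ a := by
  simp [avoiding]

theorem card_avoiding_erase_two {a : Fin 3} (ha : a ≠ 2) :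
    #((avoiding k a).erase 2) = 2 ^ k - 1 := by
  have h2 : (2 : Fin k → Fin 3) ∈ avoiding k a := mem_avoiding.mpr fun _ => ha.symm
  rw [card_erase_of_mem h2]
  simp [avoiding, Fintype.card_piFinset, card_compl]

/-- The tuples at which the covering conditions force an edge: those with an entry `2`
(coded `1`), and `(3,…,3)`. -/
def covered (k : ℕ) : Finset (Fin k → Fin 3) := ((avoiding k 1).erase 2)ᶜ

theorem mem_covered {x : Fin k → Fin 3} : x ∈ covered k ↔ x = 2 ∨ ∃ i, x i = 1 := by
  simp [covered, mem_avoiding, or_iff_not_imp_left]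

theorem card_covered_add_card_avoiding_erase_two :
    #(covered k) + #((avoiding k 0).erase 2) = 3 ^ k := by
  have hle : #((avoiding k 0).erase 2) ≤ 3 ^ k := by
    simpa using card_le_univ ((avoiding k 0).erase 2)
  rw [covered, card_compl, card_avoiding_erase_two (by decide),
    ← card_avoiding_erase_two (k := k) (a := 0) (by decide)]
  simp only [Fintype.card_fun, Fintype.card_fin]
  omega

theorem exists_apply_eq_one_of_mem_avoiding_erase_two {t : Fin k → Fin 3}
    (ht : t ∈ (avoiding k 0).erase 2) : ∃ i, t i = 1 := by
  obtain ⟨hne, ht⟩ := mem_erase.mp ht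
  obtain ⟨i, hi⟩ := Function.ne_iff.mp hne
  exact ⟨i, by have := mem_avoiding.mp ht i; change t i ≠ 2 at hi; omega⟩

namespace CCond

variable (hcc : CCond H2)
include hcc

theorem exists_adj_apply_eq_sub_one {x : Fin k → Fin 3} (hx : x ∈ avoiding k 0) (i : Fin k) :
    ∃ y, H2.Adj x y ∧ y i = x i - 1 := by
  have hx0 := mem_avoiding.mp hx i
  obtain hx1 | hx2 : x i = 1 ∨ x i = 2 := by omega
  · obtain ⟨y, hy, hC⟩ := hcc.2.1 i x hx1
    exact ⟨y, hy, by grind [CAdj]⟩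
  · obtain ⟨y, hy, hD⟩ := hcc.2.2 i x hx2 (mem_avoiding.mp hx)
    exact ⟨y, hy, by grind [DAdj]⟩

variable [DecidableRel H2.Adj]

theorem degree_pos_of_apply_eq_one {x : Fin k → Fin 3} {i : Fin k} (hx : x i = 1) :
    0 < H2.degree x :=
  let ⟨y, hy, _⟩ := hcc.2.1 i x hx
  H2.degree_pos_iff_exists_adj x |>.mpr ⟨y, hy⟩

theorem degree_pos_of_mem_covered (hk : 0 < k) {x : Fin k → Fin 3} (hx : x ∈ covered k) :
    0 < H2.degree x := by
  obtain rfl | ⟨i, hi⟩ := mem_covered.mp hx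
  · obtain ⟨y, hy, _⟩ := hcc.2.2 ⟨0, hk⟩ 2 rfl fun _ => (by decide : (2 : Fin 3) ≠ 0)
    exact H2.degree_pos_iff_exists_adj _ |>.mpr ⟨y, hy⟩
  · exact hcc.degree_pos_of_apply_eq_one hi

theorem adj_sub_one_of_degree_eq_one {x : Fin k → Fin 3} (hx : x ∈ avoiding k 0)
    (hd : H2.degree x = 1) : H2.Adj x (x - 1) := by
  obtain ⟨u, hu, huniq⟩ := degree_eq_one_iff_existsUnique_adj.mp hd
  convert hu
  funext i
  obtain ⟨y, hy, hyi⟩ := hcc.exists_adj_apply_eq_sub_one hx i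
  rw [← huniq y hy, hyi]
  rfl

theorem one_lt_degree_sub_one {t : Fin k → Fin 3} (ht : t ∈ avoiding k 0) (hd : H2.degree t = 1)
    {j : Fin k} (hj : t j = 2) : 1 < H2.degree (t - 1) := by
  obtain ⟨w, hw, hC⟩ := hcc.2.1 j (t - 1) (by simp [hj])
  have hwt : t ≠ w := fun h => by grind [CAdj]
  rw [← card_neighborFinset_eq_degree]
  exact one_lt_card.mpr ⟨t, by simpa using (hcc.adj_sub_one_of_degree_eq_one ht hd).symm,
    w, by simpa using hw, hwt⟩

theorem lt_degree_or_lt_degree_sub_one {t : Fin k → Fin 3} (ht : t ∈ (avoiding k 0).erase 2) :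
    (if t ∈ covered k then 1 else 0) < H2.degree t ∨
      (if t - 1 ∈ covered k then 1 else 0) < H2.degree (t - 1) := by
  obtain ⟨i, hi⟩ := exists_apply_eq_one_of_mem_avoiding_erase_two ht
  have hpos := hcc.degree_pos_of_apply_eq_one hi
  rw [if_pos (mem_covered.mpr (.inr ⟨i, hi⟩))]
  obtain hd | hd := Nat.lt_or_eq_of_le hpos
  · exact .inl hd
  right
  have hadj := hcc.adj_sub_one_of_degree_eq_one (mem_erase.mp ht).2 hd.symm
  split_ifs with hC
  · obtain h2 | ⟨j, hj⟩ := mem_covered.mp hC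
    · have : t i - 1 = 2 := congrFun h2 i
      simp [hi] at this
    · have : t j - 1 = 1 := hj
      exact hcc.one_lt_degree_sub_one (mem_erase.mp ht).2 hd.symm (j := j) (by omega)
  · exact H2.degree_pos_iff_exists_adj _ |>.mpr ⟨t, hadj.symm⟩

theorem three_pow_le_two_mul_card_edgeFinset (hk : 0 < k) : 3 ^ k ≤ 2 * #H2.edgeFinset := by
  rw [← card_covered_add_card_avoiding_erase_two]
  refine H2.card_add_card_le_two_mul_card_edgeFinset (p := (· - 1))
    (fun x hx => hcc.degree_pos_of_mem_covered hk hx) sub_left_injective.injOn ?_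
    (fun t ht => hcc.lt_degree_or_lt_degree_sub_one ht)
  refine disjoint_right.mpr fun x hx hxT => ?_
  obtain ⟨t, ht, rfl⟩ := mem_image.mp hx
  obtain ⟨i, hi⟩ := exists_apply_eq_one_of_mem_avoiding_erase_two ht
  exact mem_avoiding.mp (mem_erase.mp hxT).2 i (by simp [hi])

end CCond

/-- The covering demands of `C_k`: `(x, inl i)` asks for a `C_i^k`-edge at `x ∈ [3]^k_i(2)`,
and `(x, inr i)` for a `D_i^k`-edge at `x ∈ S_i^k`. -/
def IsDemand : Fin k ⊕ Fin k → (Fin k → Fin 3) → Prop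
  | .inl i, x => x i = 1
  | .inr i, x => x i = 2 ∧ ∀ t, x t ≠ 0

def Serves : Fin k ⊕ Fin k → (Fin k → Fin 3) → (Fin k → Fin 3) → Prop
  | .inl i => CAdj i
  | .inr i => DAdj i

instance (τ : Fin k ⊕ Fin k) (x : Fin k → Fin 3) : Decidable (IsDemand τ x) := by
  cases τ <;> unfold IsDemand <;> infer_instance

theorem card_demands_s19 :
    #{p : (Fin k → Fin 3) × (Fin k ⊕ Fin k) | IsDemand p.2 p.1} =
      k * (3 ^ (k - 1) + 2 ^ (k - 1)) := by
  have hC (i : Fin k) : #{x : Fin k → Fin 3 | x i = 1} = 3 ^ (k - 1) := by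
    simpa using Fintype.card_filter_piFinset_const_eq_of_mem univ i (mem_univ (1 : Fin 3))
  have hD (i : Fin k) : #{x : Fin k → Fin 3 | x i = 2 ∧ ∀ t, x t ≠ 0} = 2 ^ (k - 1) := by
    convert Fintype.card_filter_piFinset_const_eq_of_mem {0}ᶜ i
      (by decide : (2 : Fin 3) ∈ ({0}ᶜ : Finset (Fin 3))) using 2
    · ext x; simp [and_comm]
    · simp [card_compl]
    · simp
  rw [card_filter, Fintype.sum_prod_type_right, Fintype.sum_sum_type]
  simp only [← card_filter, IsDemand, hC, hD, sum_const, card_univ, Fintype.card_fin,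
    smul_eq_mul, mul_add]

theorem cCond_iff : CCond H2 ↔ (∀ x y, H2.Adj x y → ∃ i, CAdj i x y ∨ DAdj i x y) ∧
    ∀ τ x, IsDemand τ x → ∃ y, H2.Adj x y ∧ Serves τ x y := by
  simp only [CCond, Sum.forall, IsDemand, Serves, and_imp]

theorem KMinimalC.exists_private_demand (h : KMinimalC H2) {e : Sym2 (Fin k → Fin 3)}
    (he : e ∈ H2.edgeSet) : ∃ p : (Fin k → Fin 3) × (Fin k ⊕ Fin k), IsDemand p.2 p.1 ∧
      ∀ y, H2.Adj p.1 y → Serves p.2 p.1 y → s(p.1, y) = e := by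
  have hlt : H2.deleteEdges {e} < H2 := (H2.deleteEdges_le _).lt_of_ne fun heq =>
    (deleteEdges_eq_self.mp heq).ne_of_mem he (Set.mem_singleton e) rfl
  have hnot := h.not_cCond_of_lt hlt
  rw [cCond_iff] at hnot
  push Not at hnot
  obtain ⟨τ, x, hx, hno⟩ :=
    hnot fun x y hxy => (cCond_iff.mp h.cCond).1 x y (H2.deleteEdges_le _ hxy)
  refine ⟨(x, τ), hx, fun y hy hs => by_contra fun hne => hno y ?_ hs⟩
  simpa [deleteEdges_adj] using ⟨hy, hne⟩

theorem KMinimalC.card_edgeFinset_le [DecidableRel H2.Adj] (h : KMinimalC H2) :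
    #H2.edgeFinset ≤ k * (3 ^ (k - 1) + 2 ^ (k - 1)) := by
  rw [← card_demands_s19]
  refine H2.card_edgeFinset_le_card_of_forall_private (src := Prod.fst)
    (R := fun p => Serves p.2 p.1) (fun p hp => ?_) fun e he => ?_
  · exact (cCond_iff.mp h.cCond).2 p.2 p.1 (mem_filter.mp hp).2
  · obtain ⟨p, hp, hpriv⟩ := h.exists_private_demand he
    exact ⟨p, mem_filter.mpr ⟨mem_univ _, hp⟩, hpriv⟩

/-- **Theorem.** If `H2` is `k`-minimal (`k ≥ 2`), then
`(3^k + 1)/2 ≤ |E(H2)| ≤ k · (3^(k−1) + 2^(k−1))` (the lower bound stated equivalently as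
`3^k + 1 ≤ 2 · |E(H2)|`). -/
theorem kMinimal_size_bounds (k : ℕ) (hk : 2 ≤ k) (H2 : SimpleGraph (Fin k → Fin 3))
    [DecidableRel H2.Adj] (h : KMinimalC H2) :
    3 ^ k + 1 ≤ 2 * H2.edgeFinset.card ∧
    H2.edgeFinset.card ≤ k * (3 ^ (k - 1) + 2 ^ (k - 1)) := by
  refine ⟨?_, h.card_edgeFinset_le⟩
  have hle := h.cCond.three_pow_le_two_mul_card_edgeFinset (by omega)
  obtain ⟨r, hr⟩ : Odd (3 ^ k) := Odd.pow (by decide)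
  omega
end
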